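/- arXiv:1806.08459 — 2 statements merged into one kernel-verified Lean document; each statement's English description precedes it below -/
import Mathlib

section
/- Let Ω ⊆ ℝ^d be compact and let S = (d, N_1, ..., N_L) be a neural network architecture. If the activation function ρ : ℝ → ℝ is continuous, then the realization map R_ρ^Ω from the finite-dimensional normed space of neural networks with architecture S (equipped with the norm ‖Φ‖_total) to C(Ω; ℝ^{N_L}) with the sup norm is continuous. If ρ is locally Lipschitz continuous, then R_ρ^Ω is locally Lipschitz continuous. If ρ is globally Lipschitz continuous, then there is a constant C = C(ρ, S) > 0 such that the Lipschitz constant of the realization satisfies Lip(R_ρ^Ω(Φ)) ≤ C · ‖Φ‖_scaling^L for every neural network Φ with architecture S. -/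
open scoped BigOperators ENNReal NNReal Pointwise
open Filter MeasureTheory Topology

abbrev NNLayer (N : ℕ → ℕ) (ℓ : ℕ) : Type :=
  (Fin (N (ℓ + 1)) → Fin (N ℓ) → ℝ) × (Fin (N (ℓ + 1)) → ℝ)

abbrev NNParams (L : ℕ) (N : ℕ → ℕ) : Type :=
  (ℓ : Fin L) → NNLayer N ℓ.val

noncomputable def nnAffine {N : ℕ → ℕ} {ℓ : ℕ} (W : NNLayer N ℓ) (x : Fin (N ℓ) → ℝ) :
    Fin (N (ℓ + 1)) → ℝ :=
  fun i => (∑ j, W.1 i j * x j) + W.2 i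

noncomputable def nnHidden (ρ : ℝ → ℝ) :
    (L : ℕ) → (N : ℕ → ℕ) → NNParams L N → (Fin (N 0) → ℝ) → Fin (N L) → ℝ
  | 0, _, _, x => x
  | L + 1, N, Φ, x =>
      nnHidden ρ L (fun k => N (k + 1))
        (fun ℓ => Φ ⟨ℓ.val + 1, Nat.succ_lt_succ ℓ.isLt⟩)
        (fun i => ρ (nnAffine (Φ ⟨0, Nat.succ_pos L⟩) x i))

noncomputable def nnRealization (ρ : ℝ → ℝ) :
    (L : ℕ) → (N : ℕ → ℕ) → NNParams L N → (Fin (N 0) → ℝ) → Fin (N L) → ℝ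
  | 0, _, _, x => x
  | L + 1, N, Φ, x =>
      nnAffine (Φ ⟨L, Nat.lt_succ_self L⟩)
        (nnHidden ρ L N (fun ℓ => Φ ⟨ℓ.val, Nat.lt_succ_of_lt ℓ.isLt⟩) x)

noncomputable def nnRealizationScalar (ρ : ℝ → ℝ) (L : ℕ) (N : ℕ → ℕ) (h : N L = 1)
    (Φ : NNParams L N) (x : Fin (N 0) → ℝ) : ℝ :=
  nnRealization ρ L N Φ x ⟨0, by rw [h]; exact Nat.one_pos⟩

noncomputable def nnScalingNorm {L : ℕ} {N : ℕ → ℕ} (Φ : NNParams L N) : ℝ :=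
  ⨆ ℓ : Fin L, ‖(Φ ℓ).1‖

noncomputable def nnTotalNorm {L : ℕ} {N : ℕ → ℕ} (Φ : NNParams L N) : ℝ :=
  nnScalingNorm Φ + ⨆ ℓ : Fin L, ‖(Φ ℓ).2‖

/-! The realization is built by composing, layer by layer, the maps `(W, x) ↦ ρ (A x + b)`
with `W = (A, b)`. Viewed as a function of the pair (parameters, input), each of these maps is
continuous, resp. locally Lipschitz, as soon as `ρ` is, and both properties are stable under
composition. Compactness of `Ω` and of closed balls in the finite-dimensional parameter space
turns joint continuity into continuity uniformly over `Ω`, and local Lipschitz continuity into a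
Lipschitz bound on `closedBall Φ 1 ×ˢ Ω`. For an `M`-Lipschitz `ρ`, the layer `x ↦ ρ (A x + b)`
is `M · N_ℓ · ‖A‖_max`-Lipschitz for the sup norms, and multiplying over the layers gives the
factor `‖Φ‖_scaling ^ L`. -/

open Function

section PiMap

variable {ι : Type*} [Fintype ι] {α β : ι → Type*} [∀ i, PseudoEMetricSpace (α i)]
  [∀ i, PseudoEMetricSpace (β i)] {f : ∀ i, α i → β i}

lemma LipschitzWith.piMap {K : ℝ≥0} (hf : ∀ i, LipschitzWith K (f i)) :
    LipschitzWith K (Pi.map f) := fun x y =>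
  edist_pi_le_iff.2 fun i => (hf i (x i) (y i)).trans (by gcongr; exact edist_le_pi_edist x y i)

lemma LocallyLipschitz.piMap (hf : ∀ i, LocallyLipschitz (f i)) :
    LocallyLipschitz (Pi.map f) := by
  intro x
  choose K t ht hK using fun i => hf i (x i)
  refine ⟨Finset.univ.sup K, ⋂ i, eval i ⁻¹' t i,
    Filter.iInter_mem.2 fun i => (continuous_apply i).continuousAt (ht i), fun y hy z hz => ?_⟩
  simp only [Set.mem_iInter, Set.mem_preimage] at hy hz
  refine edist_pi_le_iff.2 fun i => (hK i (hy i) (hz i)).trans ?_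
  gcongr
  · exact Finset.le_sup (Finset.mem_univ i)
  · exact edist_le_pi_edist y z i

end PiMap

lemma norm_matVec_le {m n : ℕ} (A : Fin m → Fin n → ℝ) (v : Fin n → ℝ) :
    ‖fun i => ∑ j, A i j * v j‖ ≤ n * ‖A‖ * ‖v‖ := by
  refine (pi_norm_le_iff_of_nonneg (by positivity)).2 fun i => ?_
  calc ‖∑ j, A i j * v j‖ ≤ ∑ j, ‖A i j‖ * ‖v j‖ := norm_sum_le_of_le _ fun j _ => norm_mul_le _ _
    _ ≤ ∑ _j : Fin n, ‖A‖ * ‖v‖ := Finset.sum_le_sum fun j _ =>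
        mul_le_mul ((norm_le_pi_norm (A i) j).trans (norm_le_pi_norm A i)) (norm_le_pi_norm v j)
          (norm_nonneg _) (norm_nonneg _)
    _ = n * ‖A‖ * ‖v‖ := by simp [mul_assoc]

lemma eventually_forall_dist_lt_of_continuous_uncurry {X Y Z : Type*} [TopologicalSpace X]
    [TopologicalSpace Y] [PseudoMetricSpace Z] {F : X → Y → Z} (hF : Continuous (uncurry F))
    {K : Set Y} (hK : IsCompact K) (x₀ : X) {ε : ℝ} (hε : 0 < ε) :
    ∀ᶠ x in 𝓝 x₀, ∀ y ∈ K, dist (F x y) (F x₀ y) < ε := by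
  refine hK.eventually_forall_of_forall_eventually fun y _ => ?_
  have hcont : Continuous fun p : X × Y => dist (F p.1 p.2) (F x₀ p.2) :=
    hF.dist (hF.comp (continuous_const.prodMk continuous_snd))
  exact hcont.continuousAt.eventually_lt continuousAt_const (by simpa using hε)

lemma LocallyLipschitz.exists_dist_le_of_isCompact {X Y Z : Type*} [PseudoMetricSpace X]
    [PseudoMetricSpace Y] [PseudoMetricSpace Z] {F : X → Y → Z} (hF : LocallyLipschitz (uncurry F))
    {S : Set X} {K : Set Y} (hS : IsCompact S) (hK : IsCompact K) :
    ∃ C : ℝ≥0, ∀ x₁ ∈ S, ∀ x₂ ∈ S, ∀ y ∈ K, dist (F x₁ y) (F x₂ y) ≤ C * dist x₁ x₂ := by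
  obtain ⟨C, hC⟩ := hF.locallyLipschitzOn.exists_lipschitzOnWith_of_compact (hS.prod hK)
  refine ⟨C, fun x₁ hx₁ x₂ hx₂ y hy => ?_⟩
  simpa [Prod.dist_eq] using hC.dist_le_mul (x₁, y) ⟨hx₁, hy⟩ (x₂, y) ⟨hx₂, hy⟩

section Network

variable {L : ℕ} {N : ℕ → ℕ} {ℓ : ℕ}

noncomputable def nnLayer (ρ : ℝ → ℝ) (W : NNLayer N ℓ) (x : Fin (N ℓ) → ℝ) : Fin (N (ℓ + 1)) → ℝ :=
  Pi.map (fun _ => ρ) (nnAffine W x)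

def nnTail (Φ : NNParams (L + 1) N) : NNParams L (fun k => N (k + 1)) := fun ℓ => Φ ℓ.succ

def nnInit (Φ : NNParams (L + 1) N) : NNParams L N := fun ℓ => Φ ℓ.castSucc

lemma nnHidden_succ (ρ : ℝ → ℝ) (Φ : NNParams (L + 1) N) :
    nnHidden ρ (L + 1) N Φ = nnHidden ρ L _ (nnTail Φ) ∘ nnLayer ρ (Φ 0) := rfl

lemma uncurry_nnHidden_succ (ρ : ℝ → ℝ) :
    uncurry (nnHidden ρ (L + 1) N) =
      uncurry (nnHidden ρ L _) ∘ fun p => (nnTail p.1, uncurry (nnLayer ρ) (p.1 0, p.2)) := rfl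

lemma nnRealization_succ (ρ : ℝ → ℝ) (Φ : NNParams (L + 1) N) :
    nnRealization ρ (L + 1) N Φ = nnAffine (Φ (Fin.last L)) ∘ nnHidden ρ L N (nnInit Φ) := rfl

lemma uncurry_nnRealization_succ (ρ : ℝ → ℝ) :
    uncurry (nnRealization ρ (L + 1) N) =
      uncurry nnAffine ∘ fun p => (p.1 (Fin.last L), uncurry (nnHidden ρ L N) (nnInit p.1, p.2)) :=
  rfl

lemma lipschitzWith_nnTail : LipschitzWith 1 (nnTail : NNParams (L + 1) N → _) :=
  LipschitzWith.of_edist_le fun Φ Ψ => edist_pi_le_iff.2 fun ℓ => edist_le_pi_edist Φ Ψ ℓ.succ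

lemma lipschitzWith_nnInit : LipschitzWith 1 (nnInit : NNParams (L + 1) N → _) :=
  LipschitzWith.of_edist_le fun Φ Ψ => edist_pi_le_iff.2 fun ℓ => edist_le_pi_edist Φ Ψ ℓ.castSucc

lemma contDiff_uncurry_nnAffine : ContDiff ℝ 1 (uncurry (nnAffine : NNLayer N ℓ → _)) := by
  unfold nnAffine uncurry; fun_prop

lemma continuous_uncurry_nnLayer {ρ : ℝ → ℝ} (hρ : Continuous ρ) :
    Continuous (uncurry (nnLayer ρ : NNLayer N ℓ → _)) :=
  continuous_pi fun i => hρ.comp ((continuous_apply i).comp contDiff_uncurry_nnAffine.continuous)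

lemma locallyLipschitz_uncurry_nnLayer {ρ : ℝ → ℝ} (hρ : LocallyLipschitz ρ) :
    LocallyLipschitz (uncurry (nnLayer ρ : NNLayer N ℓ → _)) :=
  (LocallyLipschitz.piMap fun _ => hρ).comp contDiff_uncurry_nnAffine.locallyLipschitz

lemma continuous_uncurry_nnHidden {ρ : ℝ → ℝ} (hρ : Continuous ρ) :
    ∀ (L : ℕ) (N : ℕ → ℕ), Continuous (uncurry (nnHidden ρ L N))
  | 0, _ => continuous_snd
  | L + 1, N => by
    rw [uncurry_nnHidden_succ]
    exact (continuous_uncurry_nnHidden hρ L _).comp <|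
      (lipschitzWith_nnTail.continuous.comp continuous_fst).prodMk <|
        (continuous_uncurry_nnLayer hρ).comp <|
          ((continuous_apply (0 : Fin (L + 1))).comp continuous_fst).prodMk continuous_snd

lemma continuous_uncurry_nnRealization {ρ : ℝ → ℝ} (hρ : Continuous ρ) :
    ∀ (L : ℕ) (N : ℕ → ℕ), Continuous (uncurry (nnRealization ρ L N))
  | 0, _ => continuous_snd
  | L + 1, N => by
    rw [uncurry_nnRealization_succ]
    exact contDiff_uncurry_nnAffine.continuous.comp <|
      ((continuous_apply (Fin.last L)).comp continuous_fst).prodMk <|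
        (continuous_uncurry_nnHidden hρ L N).comp <|
          (lipschitzWith_nnInit.continuous.comp continuous_fst).prodMk continuous_snd

lemma locallyLipschitz_uncurry_nnHidden {ρ : ℝ → ℝ} (hρ : LocallyLipschitz ρ) :
    ∀ (L : ℕ) (N : ℕ → ℕ), LocallyLipschitz (uncurry (nnHidden ρ L N))
  | 0, _ => LipschitzWith.prod_snd.locallyLipschitz
  | L + 1, N => by
    rw [uncurry_nnHidden_succ]
    exact (locallyLipschitz_uncurry_nnHidden hρ L _).comp <|
      (lipschitzWith_nnTail.comp LipschitzWith.prod_fst).locallyLipschitz.prodMk <|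
        (locallyLipschitz_uncurry_nnLayer hρ).comp <|
          ((LipschitzWith.eval (0 : Fin (L + 1))).comp
            LipschitzWith.prod_fst).locallyLipschitz.prodMk LipschitzWith.prod_snd.locallyLipschitz

lemma locallyLipschitz_uncurry_nnRealization {ρ : ℝ → ℝ} (hρ : LocallyLipschitz ρ) :
    ∀ (L : ℕ) (N : ℕ → ℕ), LocallyLipschitz (uncurry (nnRealization ρ L N))
  | 0, _ => LipschitzWith.prod_snd.locallyLipschitz
  | L + 1, N => by
    rw [uncurry_nnRealization_succ]
    exact contDiff_uncurry_nnAffine.locallyLipschitz.comp <|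
      ((LipschitzWith.eval (Fin.last L)).comp LipschitzWith.prod_fst).locallyLipschitz.prodMk <|
        (locallyLipschitz_uncurry_nnHidden hρ L N).comp <|
          (lipschitzWith_nnInit.comp LipschitzWith.prod_fst).locallyLipschitz.prodMk
            LipschitzWith.prod_snd.locallyLipschitz

lemma lipschitzWith_nnAffine (W : NNLayer N ℓ) : LipschitzWith (N ℓ * ‖W.1‖₊) (nnAffine W) := by
  refine LipschitzWith.of_dist_le_mul fun x y => ?_
  have hsub : nnAffine W x - nnAffine W y = fun i => ∑ j, W.1 i j * (x - y) j := by
    ext i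
    simp [nnAffine, mul_sub, Finset.sum_sub_distrib]
  rw [dist_eq_norm, dist_eq_norm, hsub]
  push_cast
  exact norm_matVec_le _ _

lemma lipschitzWith_nnLayer {σ : ℝ → ℝ} {M : ℝ≥0} (hσ : LipschitzWith M σ) (W : NNLayer N ℓ) :
    LipschitzWith (M * (N ℓ * ‖W.1‖₊)) (nnLayer σ W) :=
  (LipschitzWith.piMap fun _ => hσ).comp (lipschitzWith_nnAffine W)

lemma lipschitzWith_nnHidden {σ : ℝ → ℝ} {M : ℝ≥0} (hσ : LipschitzWith M σ) (s : ℝ≥0) :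
    ∀ (L : ℕ) (N : ℕ → ℕ) (Φ : NNParams L N), (∀ ℓ, ‖(Φ ℓ).1‖₊ ≤ s) →
      LipschitzWith ((∏ ℓ ∈ Finset.range L, M * N ℓ) * s ^ L) (nnHidden σ L N Φ)
  | 0, _, _, _ => LipschitzWith.id.weaken (by simp)
  | L + 1, N, Φ, hΦ => by
    rw [nnHidden_succ]
    refine ((lipschitzWith_nnHidden hσ s L _ (nnTail Φ) fun ℓ => hΦ ℓ.succ).comp
      (lipschitzWith_nnLayer hσ (Φ 0))).weaken ?_
    rw [Finset.prod_range_succ', pow_succ]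
    calc _ ≤ (∏ ℓ ∈ Finset.range L, M * N (ℓ + 1)) * s ^ L * (M * (N 0 * s)) := by
          gcongr
          exacts [le_rfl, hΦ 0]
      _ = _ := by ring

lemma lipschitzWith_nnRealization {σ : ℝ → ℝ} {M : ℝ≥0} (hσ : LipschitzWith M σ) (s : ℝ≥0)
    (Φ : NNParams (L + 1) N) (hΦ : ∀ ℓ, ‖(Φ ℓ).1‖₊ ≤ s) :
    LipschitzWith (N L * (∏ ℓ ∈ Finset.range L, M * N ℓ) * s ^ (L + 1))
      (nnRealization σ (L + 1) N Φ) := by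
  rw [nnRealization_succ]
  refine ((lipschitzWith_nnAffine _).comp
    (lipschitzWith_nnHidden hσ s L N (nnInit Φ) fun ℓ => hΦ ℓ.castSucc)).weaken ?_
  calc _ ≤ N L * s * ((∏ ℓ ∈ Finset.range L, M * N ℓ) * s ^ L) := by
        gcongr; exact hΦ (Fin.last L)
    _ = _ := by ring

lemma nnScalingNorm_nonneg (Φ : NNParams L N) : 0 ≤ nnScalingNorm Φ :=
  Real.iSup_nonneg fun _ => norm_nonneg _

lemma norm_fst_le_nnScalingNorm (Φ : NNParams L N) (ℓ : Fin L) : ‖(Φ ℓ).1‖ ≤ nnScalingNorm Φ :=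
  le_ciSup (f := fun ℓ => ‖(Φ ℓ).1‖) (Finite.bddAbove_range _) ℓ

lemma norm_le_nnTotalNorm (Φ : NNParams L N) : ‖Φ‖ ≤ nnTotalNorm Φ := by
  have hbias : ∀ ℓ, ‖(Φ ℓ).2‖ ≤ ⨆ ℓ, ‖(Φ ℓ).2‖ := le_ciSup (Finite.bddAbove_range _)
  have hbias_nonneg : 0 ≤ ⨆ ℓ, ‖(Φ ℓ).2‖ := Real.iSup_nonneg fun _ => norm_nonneg _
  refine (pi_norm_le_iff_of_nonneg (add_nonneg (nnScalingNorm_nonneg Φ) hbias_nonneg)).2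
    fun ℓ => max_le ?_ ?_
  · linarith [norm_fst_le_nnScalingNorm Φ ℓ]
  · linarith [hbias ℓ, nnScalingNorm_nonneg Φ]

lemma exists_norm_nnRealization_sub_le_of_continuous {ρ : ℝ → ℝ} (hρ : Continuous ρ)
    {Ω : Set (Fin (N 0) → ℝ)} (hΩ : IsCompact Ω) (Φ : NNParams L N) {ε : ℝ} (hε : 0 < ε) :
    ∃ δ : ℝ, 0 < δ ∧ ∀ Ψ : NNParams L N, nnTotalNorm (Ψ - Φ) ≤ δ →
      ∀ x ∈ Ω, ‖nnRealization ρ L N Ψ x - nnRealization ρ L N Φ x‖ ≤ ε := by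
  obtain ⟨δ, hδ, hclose⟩ := Metric.eventually_nhds_iff.1 <|
    eventually_forall_dist_lt_of_continuous_uncurry (continuous_uncurry_nnRealization hρ L N)
      hΩ Φ hε
  refine ⟨δ / 2, half_pos hδ, fun Ψ hΨ x hx => ?_⟩
  have hΨΦ : dist Ψ Φ < δ := by
    rw [dist_eq_norm]; linarith [norm_le_nnTotalNorm (Ψ - Φ)]
  simpa [dist_eq_norm] using (hclose hΨΦ x hx).le

lemma exists_norm_nnRealization_sub_le_mul_nnTotalNorm {ρ : ℝ → ℝ} (hρ : LocallyLipschitz ρ)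
    {Ω : Set (Fin (N 0) → ℝ)} (hΩ : IsCompact Ω) (Φ : NNParams L N) :
    ∃ K : ℝ, ∀ Ψ₁ Ψ₂ : NNParams L N, nnTotalNorm (Ψ₁ - Φ) ≤ 1 → nnTotalNorm (Ψ₂ - Φ) ≤ 1 →
      ∀ x ∈ Ω, ‖nnRealization ρ L N Ψ₁ x - nnRealization ρ L N Ψ₂ x‖
        ≤ K * nnTotalNorm (Ψ₁ - Ψ₂) := by
  obtain ⟨K, hK⟩ := (locallyLipschitz_uncurry_nnRealization hρ L N).exists_dist_le_of_isCompact
    (isCompact_closedBall Φ 1) hΩ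
  have hball : ∀ Ψ, nnTotalNorm (Ψ - Φ) ≤ 1 → Ψ ∈ Metric.closedBall Φ 1 := fun Ψ h =>
    mem_closedBall_iff_norm.2 ((norm_le_nnTotalNorm _).trans h)
  refine ⟨K, fun Ψ₁ Ψ₂ h₁ h₂ x hx => ?_⟩
  calc _ ≤ K * ‖Ψ₁ - Ψ₂‖ := by
        simpa [dist_eq_norm] using hK Ψ₁ (hball Ψ₁ h₁) Ψ₂ (hball Ψ₂ h₂) x hx
    _ ≤ K * nnTotalNorm (Ψ₁ - Ψ₂) := by gcongr; exact norm_le_nnTotalNorm _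

lemma exists_norm_nnRealization_sub_le_nnScalingNorm_pow {ρ : ℝ → ℝ} {M : ℝ≥0}
    (hρ : LipschitzWith M ρ) :
    ∃ C : ℝ, 0 < C ∧ ∀ (Φ : NNParams (L + 1) N) (x y : Fin (N 0) → ℝ),
      ‖nnRealization ρ (L + 1) N Φ x - nnRealization ρ (L + 1) N Φ y‖
        ≤ C * nnScalingNorm Φ ^ (L + 1) * ‖x - y‖ := by
  refine ⟨N L * ∏ ℓ ∈ Finset.range L, (M * N ℓ : ℝ) + 1, by positivity, fun Φ x y => ?_⟩
  obtain ⟨s, hs⟩ : ∃ s : ℝ≥0, (s : ℝ) = nnScalingNorm Φ := ⟨⟨_, nnScalingNorm_nonneg Φ⟩, rfl⟩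
  have hlip := lipschitzWith_nnRealization hρ s Φ fun ℓ => by
    rw [← NNReal.coe_le_coe, coe_nnnorm, hs]; exact norm_fst_le_nnScalingNorm Φ ℓ
  rw [← dist_eq_norm]
  calc _ ≤ _ := hlip.dist_le_mul x y
    _ = (N L * ∏ ℓ ∈ Finset.range L, (M * N ℓ : ℝ)) * nnScalingNorm Φ ^ (L + 1) * ‖x - y‖ := by
        push_cast [dist_eq_norm, hs]; ring
    _ ≤ _ := by
        gcongr
        · exact pow_nonneg (nnScalingNorm_nonneg Φ) _
        · linarith

end Network

theorem stmt8_general (L : ℕ) (hL : 1 ≤ L) (N : ℕ → ℕ)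
    (Ω : Set (Fin (N 0) → ℝ)) (hΩ : IsCompact Ω) (ρ : ℝ → ℝ) :
    (Continuous ρ →
      ∀ (Φ : NNParams L N) (ε : ℝ), 0 < ε → ∃ δ : ℝ, 0 < δ ∧
        ∀ Ψ : NNParams L N, nnTotalNorm (Ψ - Φ) ≤ δ →
          ∀ x ∈ Ω, ‖nnRealization ρ L N Ψ x - nnRealization ρ L N Φ x‖ ≤ ε) ∧
    (LocallyLipschitz ρ →
      ∀ Φ : NNParams L N, ∃ K δ : ℝ, 0 < δ ∧
        ∀ Ψ₁ Ψ₂ : NNParams L N, nnTotalNorm (Ψ₁ - Φ) ≤ δ → nnTotalNorm (Ψ₂ - Φ) ≤ δ →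
          ∀ x ∈ Ω, ‖nnRealization ρ L N Ψ₁ x - nnRealization ρ L N Ψ₂ x‖
            ≤ K * nnTotalNorm (Ψ₁ - Ψ₂)) ∧
    ((∃ M : ℝ≥0, LipschitzWith M ρ) →
      ∃ C : ℝ, 0 < C ∧ ∀ Φ : NNParams L N, ∀ x ∈ Ω, ∀ y ∈ Ω,
        ‖nnRealization ρ L N Φ x - nnRealization ρ L N Φ y‖
          ≤ C * nnScalingNorm Φ ^ L * ‖x - y‖) := by
  obtain ⟨L, rfl⟩ := Nat.exists_eq_add_of_le' hL
  refine ⟨fun hρ Φ ε hε => exists_norm_nnRealization_sub_le_of_continuous hρ hΩ Φ hε,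
    fun hρ Φ => ?_, fun ⟨M, hρ⟩ => ?_⟩
  · obtain ⟨K, hK⟩ := exists_norm_nnRealization_sub_le_mul_nnTotalNorm hρ hΩ Φ
    exact ⟨K, 1, one_pos, hK⟩
  · obtain ⟨C, hC, hlip⟩ := exists_norm_nnRealization_sub_le_nnScalingNorm_pow (N := N) hρ
    exact ⟨C, hC, fun Φ x _ y _ => hlip Φ x y⟩

/-- Properties of the realization map `Φ ↦ R_ρ^Ω(Φ)` into `C(Ω; ℝ^{N L})`
(with the sup-distance on the target, spelled out elementarily):
continuity for continuous `ρ`; local Lipschitz continuity (w.r.t. `‖·‖_total`) for locally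
Lipschitz `ρ`; and `Lip(R_ρ^Ω(Φ)) ≤ C ‖Φ‖_scaling ^ L` for globally Lipschitz `ρ`. -/
theorem stmt8 (L : ℕ) (hL : 1 ≤ L) (N : ℕ → ℕ) (hN : ∀ ℓ ≤ L, 0 < N ℓ)
    (Ω : Set (Fin (N 0) → ℝ)) (hΩ : IsCompact Ω) (ρ : ℝ → ℝ) :
    (Continuous ρ →
      ∀ (Φ : NNParams L N) (ε : ℝ), 0 < ε → ∃ δ : ℝ, 0 < δ ∧
        ∀ Ψ : NNParams L N, nnTotalNorm (Ψ - Φ) ≤ δ →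
          ∀ x ∈ Ω, ‖nnRealization ρ L N Ψ x - nnRealization ρ L N Φ x‖ ≤ ε) ∧
    (LocallyLipschitz ρ →
      ∀ Φ : NNParams L N, ∃ K δ : ℝ, 0 < δ ∧
        ∀ Ψ₁ Ψ₂ : NNParams L N, nnTotalNorm (Ψ₁ - Φ) ≤ δ → nnTotalNorm (Ψ₂ - Φ) ≤ δ →
          ∀ x ∈ Ω, ‖nnRealization ρ L N Ψ₁ x - nnRealization ρ L N Ψ₂ x‖
            ≤ K * nnTotalNorm (Ψ₁ - Ψ₂)) ∧
    ((∃ M : ℝ≥0, LipschitzWith M ρ) →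
      ∃ C : ℝ, 0 < C ∧ ∀ Φ : NNParams L N, ∀ x ∈ Ω, ∀ y ∈ Ω,
        ‖nnRealization ρ L N Φ x - nnRealization ρ L N Φ y‖
          ≤ C * nnScalingNorm Φ ^ L * ‖x - y‖) :=
  stmt8_general L hL N Ω hΩ ρ
end

section
/- Let S = (d, N_1, ..., N_L) be a neural network architecture with N_0 := d, let Ω ⊆ ℝ^d, and let ρ : ℝ → ℝ be locally Lipschitz continuous. Then every family of linearly independent functions in RNN_ρ^Ω(S), each of which is a center of the star-shaped set RNN_ρ^Ω(S), has at most Σ_{ℓ=1}^L (N_{ℓ-1} + 1) N_ℓ elements. -/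
/-!
The set of realizations is a cone (scale the last layer), so a family of centers has its whole
linear span inside it. For linearly independent `f₁, …, fₙ` there are `n` points at which the
evaluation matrix `(fᵢ(xⱼ))` is invertible; hence the map sending parameters to the values of the
realization at these points is onto `ℝⁿ`. It is locally Lipschitz in the parameters because `ρ` is,
and locally Lipschitz maps do not increase Hausdorff dimension, so `n` is at most the number of
parameters.
-/

open scoped BigOperators ENNReal NNReal Pointwise
open Filter MeasureTheory Topology

/-- The set of realizations of networks with architecture `(N 0, …, N L)`
and activation `ρ`, as functions on `Ω`. -/
def RNNset (ρ : ℝ → ℝ) (L : ℕ) (N : ℕ → ℕ) (Ω : Set (Fin (N 0) → ℝ)) :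
    Set (Ω → Fin (N L) → ℝ) :=
  {f | ∃ Φ : NNParams L N, ∀ x : Ω, f x = nnRealization ρ L N Φ x.val}

/-- `f` is a center of the set `A`: segments from `f` to any point of `A` stay in `A`. -/
def IsCenter {F : Type*} [AddCommMonoid F] [Module ℝ F] (A : Set F) (f : F) : Prop :=
  f ∈ A ∧ ∀ g ∈ A, ∀ t : ℝ, 0 ≤ t → t ≤ 1 → t • f + (1 - t) • g ∈ A

section EvaluationPoints

variable {K X ι : Type*} [Field K] [Fintype ι]

theorem span_range_eval_eq_top {f : ι → X → K} (hf : LinearIndependent K f) :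
    Submodule.span K (Set.range fun x i => f i x) = ⊤ := by
  classical
  by_contra hne
  obtain ⟨φ, hφ, hle⟩ := Submodule.exists_le_ker_of_lt_top _ (lt_top_iff_ne_top.2 hne)
  have hcomb : ∑ i, (φ fun j => if i = j then 1 else 0) • f i = 0 := by
    funext x
    have hx := hle (Submodule.subset_span ⟨x, rfl⟩)
    rw [LinearMap.mem_ker, LinearMap.pi_apply_eq_sum_univ] at hx
    simpa [Finset.sum_apply, mul_comm] using hx
  have hcoeff := Fintype.linearIndependent_iff.1 hf _ hcomb
  refine hφ (LinearMap.ext fun v => ?_)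
  simp [LinearMap.pi_apply_eq_sum_univ φ v, hcoeff]

theorem exists_isUnit_matrix_eval [DecidableEq ι] {f : ι → X → K} (hf : LinearIndependent K f) :
    ∃ x : ι → X, IsUnit (Matrix.of fun j i => f i (x j)) := by
  obtain ⟨y, hy_mem, -, hy_li⟩ :=
    Submodule.exists_fun_fin_finrank_span_eq K (Set.range fun x i => f i x)
  have hrank :
      Module.finrank K (Submodule.span K (Set.range fun x i => f i x)) = Fintype.card ι := by
    rw [span_range_eval_eq_top hf, finrank_top, Module.finrank_fintype_fun_eq_card]
  let e : ι ≃ Fin _ := (Fintype.equivFin ι).trans (finCongr hrank.symm)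
  choose x hx using fun j => hy_mem (e j)
  refine ⟨x, Matrix.linearIndependent_rows_iff_isUnit.1 ?_⟩
  have hrows : (Matrix.of fun j i => f i (x j)).row = y ∘ e := funext hx
  exact hrows ▸ hy_li.comp e e.injective

end EvaluationPoints

section Centers

variable {E : Type*} [AddCommGroup E] [Module ℝ E] {A : Set E}

theorem IsCenter.smul_add_mem (hA : ∀ (c : ℝ), ∀ g ∈ A, c • g ∈ A) {f : E} (hf : IsCenter A f)
    (c : ℝ) {g : E} (hg : g ∈ A) : c • f + g ∈ A := by
  have hnonneg : ∀ c : ℝ, 0 ≤ c → ∀ g ∈ A, c • f + g ∈ A := by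
    intro c hc g hg
    have hc1 : 0 < 1 + c := by linarith
    have hseg := hA (1 + c) _ <| hf.2 g hg (c / (1 + c)) (by positivity)
      ((div_le_one hc1).2 (by linarith))
    convert hseg using 1
    rw [smul_add, smul_smul, smul_smul, mul_div_cancel₀ _ hc1.ne', mul_sub, mul_one,
      mul_div_cancel₀ _ hc1.ne', add_sub_cancel_right, one_smul]
  rcases le_total 0 c with hc | hc
  · exact hnonneg c hc g hg
  · -- reduce to `-c ≥ 0`: `c • f + g = -((-c) • f + (-g))`
    convert hA (-1) _ (hnonneg (-c) (neg_nonneg.2 hc) _ (by simpa using hA (-1) g hg)) using 1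
    module

theorem span_subset_of_isCenter (hA : ∀ (c : ℝ), ∀ g ∈ A, c • g ∈ A) (h0 : (0 : E) ∈ A)
    {ι : Type*} {f : ι → E} (hf : ∀ i, IsCenter A (f i)) :
    (Submodule.span ℝ (Set.range f) : Set E) ⊆ A := by
  intro v hv
  suffices ∀ c : ℝ, ∀ g ∈ A, c • v + g ∈ A by simpa using this 1 0 h0
  induction hv using Submodule.span_induction with
  | mem _ hv =>
    obtain ⟨i, rfl⟩ := hv
    exact (hf i).smul_add_mem hA
  | zero => simp
  | add u w _ _ hu hw =>
    intro c g hg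
    simpa [smul_add, add_assoc] using hu c _ (hw c g hg)
  | smul a u _ hu =>
    intro c g hg
    simpa [smul_smul] using hu (c * a) g hg

end Centers

theorem LocallyLipschitz.pi {α ι : Type*} [PseudoEMetricSpace α] [Fintype ι]
    {β : ι → Type*} [∀ i, PseudoEMetricSpace (β i)] {f : α → ∀ i, β i}
    (hf : ∀ i, LocallyLipschitz fun a => f a i) : LocallyLipschitz f := by
  intro a
  choose K t ht hlip using fun i => hf i a
  refine ⟨Finset.univ.sup K, ⋂ i, t i, Filter.iInter_mem.2 ht, fun b hb c hc => ?_⟩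
  refine edist_pi_le_iff.2 fun i =>
    (hlip i (Set.mem_iInter.1 hb i) (Set.mem_iInter.1 hc i)).trans ?_
  gcongr
  exact Finset.le_sup (Finset.mem_univ i)

theorem finrank_le_of_locallyLipschitz_surjective {E F : Type*}
    [NormedAddCommGroup E] [NormedSpace ℝ E] [FiniteDimensional ℝ E]
    [NormedAddCommGroup F] [NormedSpace ℝ F] [FiniteDimensional ℝ F]
    {G : E → F} (hG : LocallyLipschitz G) (hsurj : Function.Surjective G) :
    Module.finrank ℝ F ≤ Module.finrank ℝ E := by
  have hdim : dimH (Set.univ : Set F) ≤ dimH (Set.univ : Set E) :=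
    hsurj.range_eq ▸ dimH_range_le_of_locally_lipschitzOn hG
  simpa [Real.dimH_univ_eq_finrank] using hdim

section Networks

variable {N : ℕ → ℕ}

theorem finrank_nnParams (L : ℕ) :
    Module.finrank ℝ (NNParams L N) = ∑ ℓ ∈ Finset.range L, (N ℓ + 1) * N (ℓ + 1) := by
  rw [Module.finrank_pi_fintype, ← Fin.sum_univ_eq_sum_range]
  refine Finset.sum_congr rfl fun ℓ _ => ?_
  simp [Module.finrank_prod, Module.finrank_pi_fintype]
  ring

theorem contDiff_nnAffine {ℓ : ℕ} :
    ContDiff ℝ 1 (fun p : NNLayer N ℓ × (Fin (N ℓ) → ℝ) => nnAffine p.1 p.2) := by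
  unfold nnAffine
  fun_prop

theorem contDiff_nnParams_apply {L : ℕ} (ℓ : Fin L) :
    ContDiff ℝ 1 fun Φ : NNParams L N => Φ ℓ :=
  (ContinuousLinearMap.proj (R := ℝ) (φ := fun ℓ : Fin L => NNLayer N ℓ.val) ℓ).contDiff

theorem locallyLipschitz_nnHidden {ρ : ℝ → ℝ} (hρ : LocallyLipschitz ρ) :
    ∀ (L : ℕ) (N : ℕ → ℕ),
      LocallyLipschitz fun p : NNParams L N × (Fin (N 0) → ℝ) => nnHidden ρ L N p.1 p.2
  | 0, N => by
    simpa [nnHidden] using (LipschitzWith.prod_snd (α := NNParams 0 N)).locallyLipschitz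
  | L + 1, N => by
    have htail : LocallyLipschitz fun p : NNParams (L + 1) N × (Fin (N 0) → ℝ) =>
        (fun ℓ : Fin L => p.1 ⟨ℓ.val + 1, Nat.succ_lt_succ ℓ.isLt⟩ :
          NNParams L fun k => N (k + 1)) :=
      LocallyLipschitz.pi fun ℓ =>
        ((LipschitzWith.eval _).comp LipschitzWith.prod_fst).locallyLipschitz
    have hfirst : ContDiff ℝ 1 fun p : NNParams (L + 1) N × (Fin (N 0) → ℝ) =>
        nnAffine (p.1 ⟨0, Nat.succ_pos L⟩) p.2 :=
      contDiff_nnAffine.comp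
        (((contDiff_nnParams_apply ⟨0, Nat.succ_pos L⟩).comp contDiff_fst).prodMk contDiff_snd)
    have hρfirst : LocallyLipschitz fun p : NNParams (L + 1) N × (Fin (N 0) → ℝ) =>
        fun i => ρ (nnAffine (p.1 ⟨0, Nat.succ_pos L⟩) p.2 i) :=
      LocallyLipschitz.pi fun i => hρ.comp <|
        (LipschitzWith.eval i).locallyLipschitz.comp hfirst.locallyLipschitz
    have h := (locallyLipschitz_nnHidden hρ L (fun k => N (k + 1))).comp (htail.prodMk hρfirst)
    simp only [nnHidden]
    exact h

theorem locallyLipschitz_nnRealization {ρ : ℝ → ℝ} (hρ : LocallyLipschitz ρ) (L : ℕ)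
    (x : Fin (N 0) → ℝ) : LocallyLipschitz fun Φ : NNParams L N => nnRealization ρ L N Φ x := by
  cases L with
  | zero => exact LocallyLipschitz.const x
  | succ L =>
    have hinit : LocallyLipschitz fun Φ : NNParams (L + 1) N =>
        (fun ℓ : Fin L => Φ ⟨ℓ.val, Nat.lt_succ_of_lt ℓ.isLt⟩ : NNParams L N) :=
      LocallyLipschitz.pi fun ℓ => (LipschitzWith.eval _).locallyLipschitz
    have hhidden := (locallyLipschitz_nnHidden hρ L N).comp
      (hinit.prodMk (LocallyLipschitz.const x))
    have h := contDiff_nnAffine.locallyLipschitz.comp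
      ((contDiff_nnParams_apply ⟨L, Nat.lt_succ_self L⟩).locallyLipschitz.prodMk hhidden)
    simp only [nnRealization]
    exact h

theorem nnAffine_smul {ℓ : ℕ} (c : ℝ) (W : NNLayer N ℓ) (x : Fin (N ℓ) → ℝ) :
    nnAffine (c • W) x = c • nnAffine W x := by
  funext i
  simp [nnAffine, Finset.mul_sum, mul_add, mul_assoc]

theorem nnRealization_update_last_smul (ρ : ℝ → ℝ) {L : ℕ} (c : ℝ) (Φ : NNParams (L + 1) N)
    (x : Fin (N 0) → ℝ) :
    nnRealization ρ (L + 1) N (Function.update Φ (Fin.last L) (c • Φ (Fin.last L))) x =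
      c • nnRealization ρ (L + 1) N Φ x := by
  have hinit : ∀ ℓ : Fin L, Function.update Φ (Fin.last L) (c • Φ (Fin.last L))
      ⟨ℓ.val, Nat.lt_succ_of_lt ℓ.isLt⟩ = Φ ⟨ℓ.val, Nat.lt_succ_of_lt ℓ.isLt⟩ :=
    fun ℓ => Function.update_of_ne (Fin.ne_of_lt (Fin.castSucc_lt_last ℓ)) _ _
  simp only [nnRealization, hinit]
  rw [← nnAffine_smul]
  exact congrArg (nnAffine · _) (Function.update_self _ _ _)

variable {ρ : ℝ → ℝ} {L : ℕ} {Ω : Set (Fin (N 0) → ℝ)}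

theorem smul_mem_RNNset (c : ℝ) {g : Ω → Fin (N (L + 1)) → ℝ} (hg : g ∈ RNNset ρ (L + 1) N Ω) :
    c • g ∈ RNNset ρ (L + 1) N Ω := by
  obtain ⟨Φ, hΦ⟩ := hg
  refine ⟨Function.update Φ (Fin.last L) (c • Φ (Fin.last L)), fun x => ?_⟩
  rw [nnRealization_update_last_smul, ← hΦ]
  rfl

theorem zero_mem_RNNset : (0 : Ω → Fin (N (L + 1)) → ℝ) ∈ RNNset ρ (L + 1) N Ω :=
  ⟨0, fun x => by funext i; simp [nnRealization, nnAffine]⟩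

end Networks

theorem stmt14_general (L : ℕ) (hL : 1 ≤ L) (N : ℕ → ℕ)
    (Ω : Set (Fin (N 0) → ℝ)) (ρ : ℝ → ℝ) (hρ : LocallyLipschitz ρ)
    (n : ℕ) (f : Fin n → (Ω → Fin (N L) → ℝ))
    (hcenter : ∀ i, IsCenter (RNNset ρ L N Ω) (f i))
    (hli : LinearIndependent ℝ f) :
    n ≤ ∑ ℓ ∈ Finset.range L, (N ℓ + 1) * N (ℓ + 1) := by
  obtain ⟨L, rfl⟩ := Nat.exists_eq_add_of_le' hL
  have hspan := span_subset_of_isCenter (fun c _ => smul_mem_RNNset c) zero_mem_RNNset hcenter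
  obtain ⟨x, hx⟩ := exists_isUnit_matrix_eval <|
    hli.map' (LinearEquiv.curry ℝ ℝ Ω (Fin (N (L + 1)))).symm.toLinearMap (LinearEquiv.ker _)
  let G : NNParams (L + 1) N → Fin n → ℝ :=
    fun Φ j => nnRealization ρ (L + 1) N Φ (x j).1 (x j).2
  have hG : LocallyLipschitz G := LocallyLipschitz.pi fun j =>
    (LipschitzWith.eval _).locallyLipschitz.comp (locallyLipschitz_nnRealization hρ _ _)
  have hGsurj : Function.Surjective G := by
    intro v
    obtain ⟨c, rfl⟩ := Matrix.mulVec_surjective_iff_isUnit.2 hx v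
    obtain ⟨Φ, hΦ⟩ := hspan <| (Submodule.mem_span_range_iff_exists_fun ℝ).2 ⟨c, rfl⟩
    refine ⟨Φ, funext fun j => ?_⟩
    simp [G, ← hΦ, Matrix.mulVec, dotProduct, Finset.sum_apply, Function.uncurry, mul_comm]
  simpa [finrank_nnParams] using finrank_le_of_locallyLipschitz_surjective hG hGsurj

/-- Any linearly independent family of centers of the set of realizations
has at most `∑_{ℓ=1}^L (N_{ℓ-1} + 1) N_ℓ` elements. -/
theorem stmt14 (L : ℕ) (hL : 1 ≤ L) (N : ℕ → ℕ) (hN : ∀ ℓ ≤ L, 0 < N ℓ)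
    (Ω : Set (Fin (N 0) → ℝ)) (ρ : ℝ → ℝ) (hρ : LocallyLipschitz ρ)
    (n : ℕ) (f : Fin n → (Ω → Fin (N L) → ℝ))
    (hcenter : ∀ i, IsCenter (RNNset ρ L N Ω) (f i))
    (hli : LinearIndependent ℝ f) :
    n ≤ ∑ ℓ ∈ Finset.range L, (N ℓ + 1) * N (ℓ + 1) :=
  stmt14_general L hL N Ω ρ hρ n f hcenter hli
end
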